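/- arXiv:2304.08011 — 2 statements merged into one kernel-verified Lean document; each statement's English description precedes it below -/
import Mathlib

section
/- Let K be a field, n, r > 1, and let N = N_{n,r} be the quotient of the path algebra of the cyclic quiver with n vertices (arrows x: i → i+1 mod n) by the ideal generated by all paths of length r. Let 1 ≤ s ≤ n with s + r ≤ n + 1, and let e = e_1 + ⋯ + e_s be the sum of the first s vertex idempotents. Then eNe is isomorphic as a K-algebra to A(s,r), the quotient of the path algebra of the linear quiver 1 → 2 → ⋯ → s by the ideal generated by all paths of length r. -/
noncomputable section

variable (K : Type) [Field K]

/-! ### The selfinjective Nakayama algebra `N_{n,r}`: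
the path algebra of the cyclic quiver on `n` vertices modulo all paths of
length `r`, presented as a quotient of the free algebra on generators
`ε i` (trivial paths) and `a i` (arrow `i → i+1`). -/

/-- Trivial path at vertex `i` of the cyclic quiver. -/
def cyE (n : ℕ) (i : ZMod n) : FreeAlgebra K (ZMod n ⊕ ZMod n) :=
  FreeAlgebra.ι K (Sum.inl i)

/-- The arrow `i → i + 1` of the cyclic quiver. -/
def cyA (n : ℕ) (i : ZMod n) : FreeAlgebra K (ZMod n ⊕ ZMod n) :=
  FreeAlgebra.ι K (Sum.inr i)

/-- Defining relations of `N_{n,r}`. -/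
def cycRels (n r : ℕ) [NeZero n] : Set (FreeAlgebra K (ZMod n ⊕ ZMod n)) :=
  {x | ∃ i, x = cyE K n i * cyE K n i - cyE K n i} ∪
  {x | ∃ i j, i ≠ j ∧ x = cyE K n i * cyE K n j} ∪
  {(∑ i : ZMod n, cyE K n i) - 1} ∪
  {x | ∃ i, x = cyE K n i * cyA K n i - cyA K n i} ∪
  {x | ∃ i, x = cyA K n i * cyE K n (i + 1) - cyA K n i} ∪
  {x | ∃ i : ZMod n, x = ((List.range r).map (fun k => cyA K n (i + (k : ZMod n)))).prod}

/-- The selfinjective Nakayama algebra `N_{n,r}`. -/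
def Nalg (n r : ℕ) [NeZero n] : Type :=
  RingQuot (fun a b : FreeAlgebra K (ZMod n ⊕ ZMod n) => a ∈ cycRels K n r ∧ b = 0)

instance (n r : ℕ) [NeZero n] : Ring (Nalg K n r) := by unfold Nalg; infer_instance
instance (n r : ℕ) [NeZero n] : Algebra K (Nalg K n r) := by unfold Nalg; infer_instance

/-- The canonical projection onto `N_{n,r}`. -/
def NalgMk (n r : ℕ) [NeZero n] :
    FreeAlgebra K (ZMod n ⊕ ZMod n) →ₐ[K] Nalg K n r :=
  RingQuot.mkAlgHom K _

/-! ### The algebra `A(s,r) = K(linear Aₛ quiver)/rad^r`: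
generators `lE i` (trivial paths, `i : Fin s`) and `lA i` (arrow `i → i+1`;
the symbol `lA i` with `i.1 + 1 = s` does not correspond to an arrow and is
set to zero). -/

/-- Trivial path at vertex `i` of the linear quiver. -/
def lE (s : ℕ) (i : Fin s) : FreeAlgebra K (Fin s ⊕ Fin s) :=
  FreeAlgebra.ι K (Sum.inl i)

/-- The arrow `i → i + 1` of the linear quiver (zero if `i` is the last vertex). -/
def lA (s : ℕ) (i : Fin s) : FreeAlgebra K (Fin s ⊕ Fin s) :=
  FreeAlgebra.ι K (Sum.inr i)

open Fin.NatCast in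
/-- Defining relations of `A(s,r)`. -/
def linRels (s r : ℕ) [NeZero s] : Set (FreeAlgebra K (Fin s ⊕ Fin s)) :=
  {x | ∃ i, x = lE K s i * lE K s i - lE K s i} ∪
  {x | ∃ i j, i ≠ j ∧ x = lE K s i * lE K s j} ∪
  {(∑ i : Fin s, lE K s i) - 1} ∪
  {x | ∃ i : Fin s, (i : ℕ) + 1 = s ∧ x = lA K s i} ∪
  {x | ∃ i, x = lE K s i * lA K s i - lA K s i} ∪
  {x | ∃ i, x = lA K s i * lE K s (i + 1) - lA K s i} ∪
  {x | ∃ i : Fin s, x = ((List.range r).map (fun k => lA K s (i + (k : Fin s)))).prod}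

/-- The algebra `A(s,r)`, the path algebra of the linearly oriented `Aₛ`
quiver modulo all paths of length `r`. -/
def Aalg (s r : ℕ) [NeZero s] : Type :=
  RingQuot (fun a b : FreeAlgebra K (Fin s ⊕ Fin s) => a ∈ linRels K s r ∧ b = 0)

instance (s r : ℕ) [NeZero s] : Ring (Aalg K s r) := by unfold Aalg; infer_instance
instance (s r : ℕ) [NeZero s] : Algebra K (Aalg K s r) := by unfold Aalg; infer_instance

/-- The idempotent `e = e₁ + ⋯ + e_s` of `N_{n,r}` (sum of the first `s`
vertex idempotents). -/
def cornerIdem (n r s : ℕ) [NeZero n] : Nalg K n r :=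
  ∑ i ∈ Finset.range s, NalgMk K n r (cyE K n (i : ZMod n))

/-
The paths of length `< r` form a basis of `N_{n,r}`: they span since they are closed under
multiplication, and they are linearly independent because `N_{n,r}` acts on the space of
functions on paths, each path sending the indicator of a trivial path to its own indicator.
Sending the vertices and arrows of the linear quiver to those of the first `s` vertices of the
cycle (the arrow leaving the last vertex to zero) defines an algebra map from `A(s,r)` to the
corner `eNe`. It maps the spanning paths `(i, l)`, `i + l < s`, `l < r`, of `A(s,r)` to distinct
basis paths of `N_{n,r}`, so it is injective. Its image is `eNe`: for a path `p`, `e p e` is zero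
unless `p` runs from a vertex `a < s` to a vertex `b < s`, and as `s + r ≤ n + 1` such a path of
length `< r` does not wrap around the cycle, so it comes from `A(s,r)`.
-/

theorem injective_of_span_eq_top_of_linearIndependent {R M N ι : Type*} [Semiring R]
    [AddCommMonoid M] [AddCommMonoid N] [Module R M] [Module R N] {f : M →ₗ[R] N} {v : ι → M}
    (hv : Submodule.span R (Set.range v) = ⊤) (hli : LinearIndependent R (f ∘ v)) :
    Function.Injective f := by
  have hsurj : Function.Surjective (Finsupp.linearCombination R v) := by
    rw [← LinearMap.range_eq_top, Finsupp.range_linearCombination, hv]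
  refine Function.Injective.of_comp_right ?_ hsurj
  rw [← LinearMap.coe_comp, ← Finsupp.linearCombination_linear_comp]
  exact hli

theorem AlgHom.map_sub_eq_zero_of_eq {R A B : Type*} [CommRing R] [Ring A] [Semiring B]
    [Algebra R A] [Algebra R B] (f : A →ₐ[R] B) {a b : A} (h : f a = f b) : f (a - b) = 0 :=
  calc f (a - b) = f a + (-1 : R) • f b := by
        rw [sub_eq_add_neg, ← neg_one_smul R b, map_add, map_smul]
    _ = (1 + -1 : R) • f b := by rw [h, add_smul, one_smul]
    _ = 0 := by rw [add_neg_cancel, zero_smul]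

open Fin.NatCast in
theorem Fin.val_add_natCast_of_lt {s : ℕ} [NeZero s] (i : Fin s) {k : ℕ} (h : i.val + k < s) :
    (i + (k : Fin s)).val = i.val + k := by
  rw [Fin.val_add, Fin.val_natCast, Nat.add_mod_mod, Nat.mod_eq_of_lt h]

theorem natCast_injOn_zmod {n s : ℕ} (hsn : s ≤ n) :
    Set.InjOn (Nat.cast : ℕ → ZMod n) (Finset.range s) :=
  fun a ha b hb hab => by
    have hval := congrArg ZMod.val hab
    rw [Finset.coe_range, Set.mem_Iio] at ha hb
    rwa [ZMod.val_cast_of_lt (by omega), ZMod.val_cast_of_lt (by omega)] at hval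

section ArrowSystem

variable {V R : Type*} [AddMonoidWithOne V] [Semiring R]

def path (ε α : V → R) (i : V) : ℕ → R
  | 0 => ε i
  | l + 1 => path ε α i l * α (i + l)

theorem path_eq_mul_prod (ε α : V → R) (i : V) (l : ℕ) :
    path ε α i l = ε i * ((List.range l).map fun k : ℕ => α (i + k)).prod := by
  induction l with
  | zero => simp [path]
  | succ l ih => simp [path, ih, List.range_succ, mul_assoc]

theorem map_path {S F : Type*} [Semiring S] [FunLike F R S] [MulHomClass F R S] (φ : F)
    (ε α : V → R) (i : V) (l : ℕ) :
    φ (path ε α i l) = path (φ ∘ ε) (φ ∘ α) i l := by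
  induction l with
  | zero => rfl
  | succ l ih => simp [path, ih]

/-- The relations of the path algebra of the cyclic quiver on `V` (arrows `i → i + 1`). They hold
in `N_{n,r}` for `V = ZMod n`, and in `A(s,r)` for `V = Fin s`, whose wrap-around arrow is zero. -/
structure IsArrowSystem [Fintype V] (ε α : V → R) : Prop where
  complete : CompleteOrthogonalIdempotents ε
  mul_arrow : ∀ i, ε i * α i = α i
  arrow_mul : ∀ i, α i * ε (i + 1) = α i

namespace IsArrowSystem

variable [Fintype V] {ε α : V → R} (h : IsArrowSystem ε α)
include h

theorem path_one (i : V) : path ε α i 1 = α i := by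
  simp [path, h.mul_arrow]

theorem path_eq_prod (i : V) {l : ℕ} (hl : l ≠ 0) :
    path ε α i l = ((List.range l).map fun k : ℕ => α (i + k)).prod := by
  obtain ⟨l, rfl⟩ := Nat.exists_eq_add_one_of_ne_zero hl
  rw [path_eq_mul_prod, List.range_succ_eq_map, List.map_cons, List.prod_cons, ← mul_assoc,
    Nat.cast_zero, add_zero, h.mul_arrow]

theorem mul_path (i : V) (l : ℕ) : ε i * path ε α i l = path ε α i l := by
  rw [path_eq_mul_prod, ← mul_assoc, (h.complete.idem i).eq]

theorem mul_path_of_ne {i j : V} (hij : j ≠ i) (l : ℕ) : ε j * path ε α i l = 0 := by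
  rw [path_eq_mul_prod, ← mul_assoc, h.complete.ortho hij, zero_mul]

theorem path_mul (i : V) (l : ℕ) : path ε α i l * ε (i + l) = path ε α i l := by
  cases l with
  | zero => simp [path, (h.complete.idem i).eq]
  | succ l => rw [path, mul_assoc, Nat.cast_succ, ← add_assoc, h.arrow_mul]

theorem path_mul_of_ne {i j : V} {l : ℕ} (hj : j ≠ i + l) : path ε α i l * ε j = 0 := by
  rw [← h.path_mul, mul_assoc, h.complete.ortho hj.symm, mul_zero]

theorem path_add (i : V) (l m : ℕ) :
    path ε α i (l + m) = path ε α i l * path ε α (i + l) m := by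
  induction m with
  | zero => simp [path, h.path_mul]
  | succ m ih => rw [← add_assoc, path, ih, path, mul_assoc, Nat.cast_add, add_assoc]

theorem path_mul_path_of_ne {i j : V} {l : ℕ} (hj : j ≠ i + l) (m : ℕ) :
    path ε α i l * path ε α j m = 0 := by
  rw [← h.mul_path j, ← mul_assoc, h.path_mul_of_ne hj, zero_mul]

theorem path_eq_zero_of_le {i : V} {l m : ℕ} (hl : path ε α i l = 0) (hlm : l ≤ m) :
    path ε α i m = 0 := by
  rw [← Nat.add_sub_cancel' hlm, h.path_add, hl, zero_mul]

theorem path_eq_zero_of_arrow_eq_zero {i : V} {k l : ℕ} (hkl : k < l) (hk : α (i + k) = 0) :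
    path ε α i l = 0 :=
  h.path_eq_zero_of_le (l := k + 1) (by rw [h.path_add, h.path_one, hk, mul_zero]) hkl

theorem sum_mul_path [DecidableEq V] (S : Finset V) (i : V) (l : ℕ) :
    (∑ j ∈ S, ε j) * path ε α i l = if i ∈ S then path ε α i l else 0 := by
  have hterm (j : V) : ε j * path ε α i l = if i = j then path ε α i l else 0 := by
    split_ifs with hij
    · rw [← hij, h.mul_path]
    · exact h.mul_path_of_ne (Ne.symm hij) l
  rw [Finset.sum_mul, Finset.sum_congr rfl fun j _ => hterm j, Finset.sum_ite_eq]

theorem path_mul_sum [DecidableEq V] (S : Finset V) (i : V) (l : ℕ) :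
    path ε α i l * (∑ j ∈ S, ε j) = if i + l ∈ S then path ε α i l else 0 := by
  have hterm (j : V) : path ε α i l * ε j = if i + l = j then path ε α i l else 0 := by
    split_ifs with hij
    · rw [← hij, h.path_mul]
    · exact h.path_mul_of_ne (Ne.symm hij)
  rw [Finset.mul_sum, Finset.sum_congr rfl fun j _ => hterm j, Finset.sum_ite_eq]

theorem span_path {k : Type*} [CommSemiring k] [Algebra k R]
    (hgen : Algebra.adjoin k (Set.range ε ∪ Set.range α) = ⊤) :
    Submodule.span k (Set.range fun q : V × ℕ => path ε α q.1 q.2) = ⊤ := by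
  set P := Submodule.span k (Set.range fun q : V × ℕ => path ε α q.1 q.2)
  have mem (i : V) (l : ℕ) : path ε α i l ∈ P := Submodule.subset_span ⟨(i, l), rfl⟩
  have hmul (x y : R) (hx : x ∈ P) (hy : y ∈ P) : x * y ∈ P := by
    refine (show P * P ≤ P from ?_) (Submodule.mul_mem_mul hx hy)
    rw [Submodule.span_mul_span, Submodule.span_le]
    rintro _ ⟨_, ⟨⟨i, l⟩, rfl⟩, _, ⟨⟨j, m⟩, rfl⟩, rfl⟩
    dsimp only
    by_cases hj : j = i + l
    · rw [hj, ← h.path_add]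
      exact mem i (l + m)
    · rw [h.path_mul_path_of_ne hj]
      exact P.zero_mem
  have hone : (1 : R) ∈ P := by
    rw [← h.complete.complete]
    exact Submodule.sum_mem _ fun i _ => mem i 0
  have hgens : Set.range ε ∪ Set.range α ⊆ P.toSubalgebra hone hmul := by
    rintro _ (⟨i, rfl⟩ | ⟨i, rfl⟩)
    · exact mem i 0
    · rw [← h.path_one]
      exact mem i 1
  rw [eq_top_iff]
  intro x _
  exact Algebra.adjoin_le hgens (hgen ▸ Algebra.mem_top : x ∈ Algebra.adjoin k _)

end IsArrowSystem

end ArrowSystem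

section CornerAlgebra

variable {k R : Type*} [CommSemiring k] [Ring R] [Algebra k R] {e : R} (idem : IsIdempotentElem e)

instance : Algebra k idem.Corner := RingHom.toAlgebra'
  { toFun c := ⟨algebraMap k R c * e, algebraMap k R c, show e * _ * e = _ by
      rw [← Algebra.commutes, mul_assoc, idem.eq]⟩
    map_one' := Subtype.ext <| show algebraMap k R 1 * e = e by rw [map_one, one_mul]
    map_mul' c d := Subtype.ext <|
      show algebraMap k R (c * d) * e = algebraMap k R c * e * (algebraMap k R d * e) by
      rw [map_mul, mul_assoc (algebraMap k R c) e, ← mul_assoc e, ← Algebra.commutes d e,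
        mul_assoc _ e e, idem.eq, mul_assoc]
    map_zero' := Subtype.ext <| show algebraMap k R 0 * e = 0 by rw [map_zero, zero_mul]
    map_add' c d := Subtype.ext <| show algebraMap k R (c + d) * e = _ by
      rw [map_add, add_mul]
      rfl }
  fun c x => Subtype.ext <| by
    obtain ⟨hl, hr⟩ := (Subsemigroup.mem_corner_iff idem).1 x.2
    show algebraMap k R c * e * x.1 = x.1 * (algebraMap k R c * e)
    rw [mul_assoc, hl, ← mul_assoc, ← Algebra.commutes, mul_assoc, hr]

def IsIdempotentElem.cornerSubtypeₗ : idem.Corner →ₗ[k] R where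
  toFun := Subtype.val
  map_add' _ _ := rfl
  map_smul' c x := by
    show algebraMap k R c * e * x.1 = c • x.1
    rw [mul_assoc, ((Subsemigroup.mem_corner_iff idem).1 x.2).1, Algebra.smul_def]

end CornerAlgebra

section PathRepresentation

variable (k : Type*) [CommSemiring k] {V : Type*} [DecidableEq V]

/- The left regular representation of `N_{n,r}` written in its path basis: the coordinate
`(j, m)` stands for the path of length `m` starting at `j`, and `arrowOp k r i` prepends the arrow
`i → i + 1`. The coordinates with `m ≥ r` only pad the space and are never reached by arrows. -/

def vertexOp (i : V) : Module.End k (V × ℕ → k) :=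
  LinearMap.pi fun p => if p.1 = i then LinearMap.proj p else 0

theorem vertexOp_apply (i : V) (f : V × ℕ → k) (p : V × ℕ) :
    vertexOp k i f p = if p.1 = i then f p else 0 := by
  simp only [vertexOp, LinearMap.pi_apply]
  split_ifs <;> rfl

variable [AddMonoidWithOne V] (r : ℕ)

def arrowOp (i : V) : Module.End k (V × ℕ → k) :=
  LinearMap.pi fun p =>
    if p.1 = i ∧ 0 < p.2 ∧ p.2 < r then LinearMap.proj (i + 1, p.2 - 1) else 0

variable {k r}

theorem arrowOp_apply (i : V) (f : V × ℕ → k) (p : V × ℕ) :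
    arrowOp k r i f p = if p.1 = i ∧ 0 < p.2 ∧ p.2 < r then f (i + 1, p.2 - 1) else 0 := by
  simp only [arrowOp, LinearMap.pi_apply]
  split_ifs <;> rfl

theorem isArrowSystem_op [Fintype V] : IsArrowSystem (vertexOp k (V := V)) (arrowOp k r) where
  complete :=
    { idem i := by
        ext f p
        simp only [Module.End.mul_apply, vertexOp_apply]
        split_ifs <;> rfl
      ortho i j hij := by
        ext f p
        simp only [Module.End.mul_apply, vertexOp_apply]
        split_ifs with hi hj <;> first | rfl | exact absurd (hi.symm.trans hj) hij
      complete := by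
        ext f p
        simp [vertexOp_apply] }
  mul_arrow i := by
    ext f p
    simp only [Module.End.mul_apply, vertexOp_apply, arrowOp_apply]
    split_ifs <;> simp_all
  arrow_mul i := by
    ext f p
    simp only [Module.End.mul_apply, vertexOp_apply, arrowOp_apply]
    split_ifs <;> simp_all

theorem path_op_apply (i : V) (l : ℕ) (f : V × ℕ → k) (j : V) {m : ℕ} (hm : m < r) :
    path (vertexOp k) (arrowOp k r) i l f (j, m) =
      if j = i ∧ l ≤ m then f (i + l, m - l) else 0 := by
  induction l generalizing f with
  | zero => by_cases hj : j = i <;> simp [path, vertexOp_apply, hj]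
  | succ l ih =>
    rw [path, Module.End.mul_apply, ih, arrowOp_apply]
    have hcoord : (i + l + 1, m - l - 1) = (i + ↑(l + 1), m - (l + 1)) := by
      rw [Nat.cast_succ, add_assoc, Nat.sub_sub]
    by_cases hj : j = i
    · simp only [hj, true_and]
      split_ifs <;> first | omega | rfl | rw [hcoord]
    · simp [hj]

theorem path_op_eq_zero [Fintype V] (hr : r ≠ 0) (i : V) :
    path (vertexOp k) (arrowOp k r) i r = 0 := by
  ext f ⟨j, m⟩
  by_cases hm : m < r
  · rw [path_op_apply i r f j hm, if_neg (by omega)]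
    rfl
  · rw [← Nat.add_sub_cancel' (Nat.one_le_iff_ne_zero.2 hr), isArrowSystem_op.path_add,
      isArrowSystem_op.path_one, Module.End.mul_apply, arrowOp_apply, if_neg (by omega)]
    rfl

theorem linearIndependent_path_op [Fintype V] :
    LinearIndependent k fun q : V × Fin r => path (vertexOp k) (arrowOp k r) q.1 q.2 := by
  -- `L` reads off the coefficient on the path `q`: apply to the trivial path at its end vertex
  -- `q.1 + q.2`, then take coordinate `q`.
  let L : Module.End k (V × ℕ → k) →ₗ[k] V × Fin r → k := LinearMap.pi fun q =>
    LinearMap.proj (q.1, q.2.val) ∘ₗ LinearMap.applyₗ (Pi.single (q.1 + q.2.val, 0) 1)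
  refine LinearIndependent.of_comp L ?_
  convert (Pi.basisFun k (V × Fin r)).linearIndependent
  ext ⟨i, l⟩ ⟨j, m⟩
  simp only [L, Function.comp_apply, LinearMap.pi_apply, LinearMap.comp_apply,
    LinearMap.applyₗ_apply_apply, LinearMap.proj_apply, path_op_apply _ _ _ _ m.2,
    Pi.basisFun_apply, Pi.single_apply, Prod.mk.injEq]
  rcases eq_or_ne j i with rfl | hji
  · rw [← ite_and]
    refine if_congr ⟨fun h => ⟨rfl, Fin.ext (by omega)⟩, ?_⟩ rfl rfl
    rintro ⟨-, rfl⟩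
    simp
  · simp [hji]

end PathRepresentation

namespace Nalg

def vertex (n r : ℕ) [NeZero n] (i : ZMod n) : Nalg K n r := NalgMk K n r (cyE K n i)

def arrow (n r : ℕ) [NeZero n] (i : ZMod n) : Nalg K n r := NalgMk K n r (cyA K n i)

variable {K} {n r : ℕ} [NeZero n]

theorem mk_eq_zero {x : FreeAlgebra K (ZMod n ⊕ ZMod n)} (hx : x ∈ cycRels K n r) :
    NalgMk K n r x = 0 :=
  (RingQuot.mkAlgHom_rel K ⟨hx, rfl⟩).trans (map_zero _)

theorem isArrowSystem : IsArrowSystem (vertex K n r) (arrow K n r) where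
  complete :=
    { idem i := sub_eq_zero.1 <| by
        simpa [vertex] using mk_eq_zero (r := r) (.inl <| .inl <| .inl <| .inl <| .inl ⟨i, rfl⟩)
      ortho i j hij := by
        simpa [vertex] using
          mk_eq_zero (r := r) (.inl <| .inl <| .inl <| .inl <| .inr ⟨i, j, hij, rfl⟩)
      complete := sub_eq_zero.1 <| by
        simpa [vertex] using mk_eq_zero (K := K) (r := r) (.inl <| .inl <| .inl <| .inr rfl) }
  mul_arrow i := sub_eq_zero.1 <| by
    simpa [vertex, arrow] using mk_eq_zero (r := r) (.inl <| .inl <| .inr ⟨i, rfl⟩)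
  arrow_mul i := sub_eq_zero.1 <| by
    simpa [vertex, arrow] using mk_eq_zero (r := r) (.inl <| .inr ⟨i, rfl⟩)

theorem path_eq_zero (hr : r ≠ 0) (i : ZMod n) : path (vertex K n r) (arrow K n r) i r = 0 := by
  rw [isArrowSystem.path_eq_prod i hr]
  -- In `cycRels` the ascription `(k : ZMod n)` coerces the list `List.range r` itself, through
  -- the list monad; `bind_pure_comp` turns this back into a `List.map`.
  simpa only [bind_pure_comp, List.map_eq_map, List.map_map, map_list_prod, Function.comp_def,
    arrow] using mk_eq_zero (K := K) (r := r) (.inr ⟨i, rfl⟩)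

theorem adjoin_eq_top :
    Algebra.adjoin K (Set.range (vertex K n r) ∪ Set.range (arrow K n r)) = ⊤ := by
  have hgens : Set.range (vertex K n r) ∪ Set.range (arrow K n r) =
      NalgMk K n r '' Set.range (FreeAlgebra.ι K) := by
    rw [← Set.range_comp, ← Set.Sum.elim_range]
    congr 1
    ext (i | i) <;> rfl
  rw [hgens, ← AlgHom.map_adjoin, FreeAlgebra.adjoin_range_ι, Algebra.map_top,
    AlgHom.range_eq_top]
  exact RingQuot.mkAlgHom_surjective K _

section Lift

variable {S : Type*} [Semiring S] [Algebra K S] {ε α : ZMod n → S}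

theorem lift_eq_zero_of_mem_cycRels (hr : r ≠ 0) (h : IsArrowSystem ε α)
    (htrunc : ∀ i, path ε α i r = 0) {x : FreeAlgebra K (ZMod n ⊕ ZMod n)}
    (hx : x ∈ cycRels K n r) : FreeAlgebra.lift K (Sum.elim ε α) x = 0 := by
  rcases hx with
    (((((⟨i, rfl⟩ | ⟨i, j, hij, rfl⟩) | rfl) | ⟨i, rfl⟩) | ⟨i, rfl⟩) | ⟨i, rfl⟩)
  · exact AlgHom.map_sub_eq_zero_of_eq _ (by simp [cyE, (h.complete.idem i).eq])
  · simp [cyE, h.complete.ortho hij]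
  · exact AlgHom.map_sub_eq_zero_of_eq _ (by simp [cyE, h.complete.complete])
  · exact AlgHom.map_sub_eq_zero_of_eq _ (by simp [cyE, cyA, h.mul_arrow])
  · exact AlgHom.map_sub_eq_zero_of_eq _ (by simp [cyE, cyA, h.arrow_mul])
  · rw [← htrunc i, h.path_eq_prod i hr]
    simp only [bind_pure_comp, List.map_eq_map, List.map_map, map_list_prod, Function.comp_def,
      cyA, FreeAlgebra.lift_ι_apply, Sum.elim_inr]

def lift (hr : r ≠ 0) (h : IsArrowSystem ε α) (htrunc : ∀ i, path ε α i r = 0) :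
    Nalg K n r →ₐ[K] S :=
  RingQuot.liftAlgHom K ⟨FreeAlgebra.lift K (Sum.elim ε α), fun _ _ ⟨hx, hy⟩ => by
    rw [lift_eq_zero_of_mem_cycRels hr h htrunc hx, hy, map_zero]⟩

theorem lift_vertex (hr : r ≠ 0) (h : IsArrowSystem ε α) (htrunc : ∀ i, path ε α i r = 0)
    (i : ZMod n) : lift hr h htrunc (vertex K n r i) = ε i :=
  (RingQuot.liftAlgHom_mkAlgHom_apply K _ _ _).trans (FreeAlgebra.lift_ι_apply _ _)

theorem lift_arrow (hr : r ≠ 0) (h : IsArrowSystem ε α) (htrunc : ∀ i, path ε α i r = 0)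
    (i : ZMod n) : lift hr h htrunc (arrow K n r i) = α i :=
  (RingQuot.liftAlgHom_mkAlgHom_apply K _ _ _).trans (FreeAlgebra.lift_ι_apply _ _)

end Lift

theorem linearIndependent_path (hr : r ≠ 0) :
    LinearIndependent K fun q : ZMod n × Fin r => path (vertex K n r) (arrow K n r) q.1 q.2 := by
  let φ : Nalg K n r →ₐ[K] _ := lift hr isArrowSystem_op (path_op_eq_zero (k := K) hr)
  refine LinearIndependent.of_comp φ.toLinearMap ?_
  have hε : φ ∘ vertex K n r = vertexOp K := funext (lift_vertex hr _ _)
  have hα : φ ∘ arrow K n r = arrowOp K r := funext (lift_arrow hr _ _)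
  have hpath :
      φ.toLinearMap ∘ (fun q : ZMod n × Fin r => path (vertex K n r) (arrow K n r) q.1 q.2) =
        fun q => path (vertexOp K) (arrowOp K r) q.1 q.2 := by
    ext1 q
    simp only [Function.comp_apply, AlgHom.toLinearMap_apply, map_path, hε, hα]
  rw [hpath]
  exact linearIndependent_path_op

end Nalg

namespace Aalg

open Fin.NatCast

def mk (s r : ℕ) [NeZero s] : FreeAlgebra K (Fin s ⊕ Fin s) →ₐ[K] Aalg K s r :=
  RingQuot.mkAlgHom K _

def vertex (s r : ℕ) [NeZero s] (i : Fin s) : Aalg K s r := mk K s r (lE K s i)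

def arrow (s r : ℕ) [NeZero s] (i : Fin s) : Aalg K s r := mk K s r (lA K s i)

variable {K} {s r : ℕ} [NeZero s]

theorem mk_eq_zero {x : FreeAlgebra K (Fin s ⊕ Fin s)} (hx : x ∈ linRels K s r) :
    mk K s r x = 0 :=
  (RingQuot.mkAlgHom_rel K ⟨hx, rfl⟩).trans (map_zero _)

theorem isArrowSystem : IsArrowSystem (vertex K s r) (arrow K s r) where
  complete :=
    { idem i := sub_eq_zero.1 <| by
        simpa [vertex] using
          mk_eq_zero (r := r) (.inl <| .inl <| .inl <| .inl <| .inl <| .inl ⟨i, rfl⟩)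
      ortho i j hij := by
        simpa [vertex] using
          mk_eq_zero (r := r) (.inl <| .inl <| .inl <| .inl <| .inl <| .inr ⟨i, j, hij, rfl⟩)
      complete := sub_eq_zero.1 <| by
        simpa [vertex] using
          mk_eq_zero (K := K) (r := r) (.inl <| .inl <| .inl <| .inl <| .inr rfl) }
  mul_arrow i := sub_eq_zero.1 <| by
    simpa [vertex, arrow] using mk_eq_zero (r := r) (.inl <| .inl <| .inr ⟨i, rfl⟩)
  arrow_mul i := sub_eq_zero.1 <| by
    simpa [vertex, arrow] using mk_eq_zero (r := r) (.inl <| .inr ⟨i, rfl⟩)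

theorem arrow_eq_zero {i : Fin s} (hi : i.val + 1 = s) : arrow K s r i = 0 :=
  mk_eq_zero (.inl <| .inl <| .inl <| .inr ⟨i, hi, rfl⟩)

theorem path_eq_zero (hr : r ≠ 0) (i : Fin s) : path (vertex K s r) (arrow K s r) i r = 0 := by
  rw [isArrowSystem.path_eq_prod i hr]
  simpa only [bind_pure_comp, List.map_eq_map, List.map_map, map_list_prod, Function.comp_def,
    arrow] using mk_eq_zero (K := K) (r := r) (.inr ⟨i, rfl⟩)

theorem path_eq_zero_of_le_add (i : Fin s) {l : ℕ} (hl : s ≤ i.val + l) :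
    path (vertex K s r) (arrow K s r) i l = 0 := by
  have hi := i.isLt
  refine isArrowSystem.path_eq_zero_of_arrow_eq_zero (k := s - 1 - i.val) (by omega)
    (arrow_eq_zero ?_)
  rw [Fin.val_add_natCast_of_lt i (by omega)]
  omega

theorem adjoin_eq_top :
    Algebra.adjoin K (Set.range (vertex K s r) ∪ Set.range (arrow K s r)) = ⊤ := by
  have hgens : Set.range (vertex K s r) ∪ Set.range (arrow K s r) =
      mk K s r '' Set.range (FreeAlgebra.ι K) := by
    rw [← Set.range_comp, ← Set.Sum.elim_range]
    congr 1
    ext (i | i) <;> rfl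
  rw [hgens, ← AlgHom.map_adjoin, FreeAlgebra.adjoin_range_ι, Algebra.map_top,
    AlgHom.range_eq_top]
  exact RingQuot.mkAlgHom_surjective K _

theorem span_path_lt (hr : r ≠ 0) :
    Submodule.span K (Set.range fun q : {q : Fin s × Fin r // q.1.val + q.2.val < s} =>
      path (vertex K s r) (arrow K s r) q.1.1 q.1.2) = ⊤ := by
  rw [eq_top_iff, ← isArrowSystem.span_path adjoin_eq_top, Submodule.span_le]
  rintro _ ⟨⟨i, l⟩, rfl⟩
  dsimp only
  by_cases hl : l < r
  · by_cases hil : i.val + l < s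
    · exact Submodule.subset_span ⟨⟨(i, ⟨l, hl⟩), hil⟩, rfl⟩
    · rw [SetLike.mem_coe, path_eq_zero_of_le_add i (by omega)]
      exact Submodule.zero_mem _
  · rw [SetLike.mem_coe, isArrowSystem.path_eq_zero_of_le (path_eq_zero hr i) (not_lt.1 hl)]
    exact Submodule.zero_mem _

section Lift

variable {S : Type*} [Semiring S] [Algebra K S] {ε α : Fin s → S}

theorem lift_eq_zero_of_mem_linRels (hr : r ≠ 0) (h : IsArrowSystem ε α)
    (htrunc : ∀ i, path ε α i r = 0) (hlast : ∀ i : Fin s, i.val + 1 = s → α i = 0)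
    {x : FreeAlgebra K (Fin s ⊕ Fin s)} (hx : x ∈ linRels K s r) :
    FreeAlgebra.lift K (Sum.elim ε α) x = 0 := by
  rcases hx with
    ((((((⟨i, rfl⟩ | ⟨i, j, hij, rfl⟩) | rfl) | ⟨i, hi, rfl⟩) | ⟨i, rfl⟩) | ⟨i, rfl⟩) | ⟨i, rfl⟩)
  · exact AlgHom.map_sub_eq_zero_of_eq _ (by simp [lE, (h.complete.idem i).eq])
  · simp [lE, h.complete.ortho hij]
  · exact AlgHom.map_sub_eq_zero_of_eq _ (by simp [lE, h.complete.complete])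
  · simp [lA, hlast i hi]
  · exact AlgHom.map_sub_eq_zero_of_eq _ (by simp [lE, lA, h.mul_arrow])
  · exact AlgHom.map_sub_eq_zero_of_eq _ (by simp [lE, lA, h.arrow_mul])
  · rw [← htrunc i, h.path_eq_prod i hr]
    simp only [bind_pure_comp, List.map_eq_map, List.map_map, map_list_prod, Function.comp_def,
      lA, FreeAlgebra.lift_ι_apply, Sum.elim_inr]

def lift (hr : r ≠ 0) (h : IsArrowSystem ε α) (htrunc : ∀ i, path ε α i r = 0)
    (hlast : ∀ i : Fin s, i.val + 1 = s → α i = 0) : Aalg K s r →ₐ[K] S :=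
  RingQuot.liftAlgHom K ⟨FreeAlgebra.lift K (Sum.elim ε α), fun _ _ ⟨hx, hy⟩ => by
    rw [lift_eq_zero_of_mem_linRels hr h htrunc hlast hx, hy, map_zero]⟩

theorem lift_vertex (hr : r ≠ 0) (h : IsArrowSystem ε α) (htrunc : ∀ i, path ε α i r = 0)
    (hlast : ∀ i : Fin s, i.val + 1 = s → α i = 0) (i : Fin s) :
    lift hr h htrunc hlast (vertex K s r i) = ε i :=
  (RingQuot.liftAlgHom_mkAlgHom_apply K _ _ _).trans (FreeAlgebra.lift_ι_apply _ _)

theorem lift_arrow (hr : r ≠ 0) (h : IsArrowSystem ε α) (htrunc : ∀ i, path ε α i r = 0)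
    (hlast : ∀ i : Fin s, i.val + 1 = s → α i = 0) (i : Fin s) :
    lift hr h htrunc hlast (arrow K s r i) = α i :=
  (RingQuot.liftAlgHom_mkAlgHom_apply K _ _ _).trans (FreeAlgebra.lift_ι_apply _ _)

end Lift

end Aalg

section CornerOfNakayama

open Fin.NatCast

variable {K} {n r s : ℕ} [NeZero n]

theorem cornerIdem_eq_sum (hsn : s ≤ n) :
    cornerIdem K n r s =
      ∑ j ∈ (Finset.range s).image (Nat.cast : ℕ → ZMod n), Nalg.vertex K n r j := by
  rw [Finset.sum_image (natCast_injOn_zmod hsn)]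
  rfl

theorem isIdempotentElem_cornerIdem (hsn : s ≤ n) : IsIdempotentElem (cornerIdem K n r s) := by
  rw [cornerIdem_eq_sum hsn]
  exact Nalg.isArrowSystem.complete.toOrthogonalIdempotents.isIdempotentElem_sum

theorem cornerIdem_mul_path_mul_cornerIdem (hsn : s ≤ n) (j : ZMod n) (l : ℕ) :
    cornerIdem K n r s * path (Nalg.vertex K n r) (Nalg.arrow K n r) j l * cornerIdem K n r s =
      if (∃ a < s, (a : ZMod n) = j) ∧ (∃ b < s, (b : ZMod n) = j + l) then
        path (Nalg.vertex K n r) (Nalg.arrow K n r) j l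
      else 0 := by
  rw [cornerIdem_eq_sum hsn, Nalg.isArrowSystem.sum_mul_path]
  simp only [Finset.mem_image, Finset.mem_range]
  split_ifs <;> simp_all [Nalg.isArrowSystem.path_mul_sum]

theorem path_mem_corner (hsn : s ≤ n) {a l : ℕ} (hal : a + l < s) :
    path (Nalg.vertex K n r) (Nalg.arrow K n r) a l ∈ Subsemigroup.corner (cornerIdem K n r s) :=
  ⟨_, (cornerIdem_mul_path_mul_cornerIdem hsn _ l).trans
    (if_pos ⟨⟨a, by omega, rfl⟩, a + l, hal, Nat.cast_add a l⟩)⟩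

def cornerVertex (hsn : s ≤ n) (i : Fin s) :
    (isIdempotentElem_cornerIdem (K := K) (r := r) hsn).Corner :=
  ⟨Nalg.vertex K n r i.val, path_mem_corner (l := 0) hsn (by omega)⟩

def cornerArrow (hsn : s ≤ n) (i : Fin s) :
    (isIdempotentElem_cornerIdem (K := K) (r := r) hsn).Corner :=
  ⟨if i.val + 1 < s then Nalg.arrow K n r i.val else 0, by
    split_ifs with hi
    · rw [← Nalg.isArrowSystem.path_one]
      exact path_mem_corner hsn hi
    · exact ⟨0, by simp⟩⟩

theorem val_cornerArrow (hsn : s ≤ n) {i : Fin s} (hi : i.val + 1 < s) :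
    (cornerArrow (r := r) hsn i).val = Nalg.arrow K n r i.val :=
  if_pos hi

theorem cornerArrow_eq_zero (hsn : s ≤ n) {i : Fin s} (hi : ¬i.val + 1 < s) :
    cornerArrow (K := K) (r := r) hsn i = 0 :=
  Subtype.ext (if_neg hi)

variable [NeZero s]

theorem isArrowSystem_corner (hsn : s ≤ n) :
    IsArrowSystem (cornerVertex (K := K) (r := r) hsn) (cornerArrow hsn) where
  complete :=
    { idem i := Subtype.ext (Nalg.isArrowSystem.complete.idem _)
      ortho i j hij := Subtype.ext <| Nalg.isArrowSystem.complete.ortho fun h =>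
        hij (Fin.ext (natCast_injOn_zmod hsn (by simp) (by simp) h))
      complete := Subtype.ext <| by
        show IsIdempotentElem.cornerSubtypeₗ (k := K) _ (∑ i, cornerVertex hsn i) =
          cornerIdem K n r s
        rw [map_sum]
        exact Fin.sum_univ_eq_sum_range (fun i => Nalg.vertex K n r i) s }
  mul_arrow i := by
    by_cases hi : i.val + 1 < s
    · refine Subtype.ext ?_
      show Nalg.vertex K n r i.val * (cornerArrow hsn i).val = (cornerArrow hsn i).val
      rw [val_cornerArrow hsn hi, Nalg.isArrowSystem.mul_arrow]
    · rw [cornerArrow_eq_zero hsn hi, mul_zero]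
  arrow_mul i := by
    by_cases hi : i.val + 1 < s
    · refine Subtype.ext ?_
      show (cornerArrow hsn i).val * Nalg.vertex K n r (i + 1).val = (cornerArrow hsn i).val
      rw [← Nat.cast_one (R := Fin s), Fin.val_add_natCast_of_lt i hi, val_cornerArrow hsn hi,
        Nat.cast_succ, Nalg.isArrowSystem.arrow_mul]
    · rw [cornerArrow_eq_zero hsn hi, zero_mul]

theorem val_path_corner (hsn : s ≤ n) {i : Fin s} {l : ℕ} (hil : i.val + l < s) :
    (path (cornerVertex hsn) (cornerArrow hsn) i l).val =
      path (Nalg.vertex K n r) (Nalg.arrow K n r) i.val l := by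
  induction l with
  | zero => rfl
  | succ l ih =>
    have hval : (i + (l : Fin s)).val = i.val + l := Fin.val_add_natCast_of_lt i (by omega)
    show (path (cornerVertex hsn) (cornerArrow hsn) i l).val * (cornerArrow hsn (i + l)).val = _
    rw [ih (by omega), val_cornerArrow hsn (by omega), hval, Nat.cast_add]
    rfl

theorem path_corner_eq_zero (hsn : s ≤ n) (hr : r ≠ 0) (i : Fin s) :
    path (cornerVertex (K := K) (r := r) hsn) (cornerArrow hsn) i r = 0 := by
  by_cases hir : i.val + r < s
  · exact Subtype.ext ((val_path_corner hsn hir).trans (Nalg.path_eq_zero hr _))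
  · have hi := i.isLt
    refine (isArrowSystem_corner hsn).path_eq_zero_of_arrow_eq_zero (k := s - 1 - i.val)
      (by omega) (cornerArrow_eq_zero hsn ?_)
    rw [Fin.val_add_natCast_of_lt i (by omega)]
    omega

def cornerHom (hsn : s ≤ n) (hr : r ≠ 0) :
    Aalg K s r →ₐ[K] (isIdempotentElem_cornerIdem (K := K) (r := r) hsn).Corner :=
  Aalg.lift hr (isArrowSystem_corner (K := K) (r := r) hsn) (path_corner_eq_zero hsn hr)
    fun _ hi => cornerArrow_eq_zero hsn (by omega)

theorem val_cornerHom_path (hsn : s ≤ n) (hr : r ≠ 0) {i : Fin s} {l : ℕ}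
    (hil : i.val + l < s) :
    (cornerHom hsn hr (path (Aalg.vertex K s r) (Aalg.arrow K s r) i l)).val =
      path (Nalg.vertex K n r) (Nalg.arrow K n r) i.val l := by
  have hv : cornerHom hsn hr ∘ Aalg.vertex K s r = cornerVertex hsn :=
    funext (Aalg.lift_vertex (K := K) _ _ _ _)
  have ha : cornerHom hsn hr ∘ Aalg.arrow K s r = cornerArrow hsn :=
    funext (Aalg.lift_arrow (K := K) _ _ _ _)
  rw [map_path, hv, ha, val_path_corner hsn hil]

def cornerEmbedding (hsn : s ≤ n) (hr : r ≠ 0) : Aalg K s r →ₗ[K] Nalg K n r :=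
  (isIdempotentElem_cornerIdem hsn).cornerSubtypeₗ ∘ₗ (cornerHom hsn hr).toLinearMap

theorem cornerEmbedding_apply (hsn : s ≤ n) (hr : r ≠ 0) (x : Aalg K s r) :
    cornerEmbedding hsn hr x = (cornerHom hsn hr x).val :=
  rfl

theorem injective_cornerEmbedding (hsn : s ≤ n) (hr : r ≠ 0) :
    Function.Injective (cornerEmbedding (K := K) hsn hr) := by
  refine injective_of_span_eq_top_of_linearIndependent (Aalg.span_path_lt hr) ?_
  have hv : cornerEmbedding hsn hr ∘
      (fun q : {q : Fin s × Fin r // q.1.val + q.2.val < s} =>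
        path (Aalg.vertex K s r) (Aalg.arrow K s r) q.1.1 q.1.2) =
      (fun q : ZMod n × Fin r => path (Nalg.vertex K n r) (Nalg.arrow K n r) q.1 q.2) ∘
        fun q => ((q.1.1.val : ZMod n), q.1.2) :=
    funext fun q => val_cornerHom_path hsn hr q.2
  rw [hv]
  refine (Nalg.linearIndependent_path hr).comp _ fun q q' hqq' => ?_
  obtain ⟨hi, hl⟩ := Prod.mk.inj hqq'
  exact Subtype.ext (Prod.ext (Fin.ext (natCast_injOn_zmod hsn (by simp) (by simp) hi)) hl)

theorem cornerIdem_mul_path_mul_cornerIdem_mem_range (hsn : s ≤ n) (hr : r ≠ 0)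
    (hsr : s + r ≤ n + 1) (j : ZMod n) (l : ℕ) :
    cornerIdem K n r s * path (Nalg.vertex K n r) (Nalg.arrow K n r) j l * cornerIdem K n r s ∈
      LinearMap.range (cornerEmbedding hsn hr) := by
  rw [cornerIdem_mul_path_mul_cornerIdem hsn]
  split_ifs with h
  · obtain ⟨⟨a, ha, rfl⟩, b, hb, hab⟩ := h
    by_cases hl : l < r
    · -- `s + r ≤ n + 1` keeps `a + l` below `n`: a short path does not wrap around the cycle.
      have hab' : a + l = b := natCast_injOn_zmod (le_refl n) (by simp; omega) (by simp; omega)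
        (by push_cast; exact hab.symm)
      exact ⟨path (Aalg.vertex K s r) (Aalg.arrow K s r) ⟨a, ha⟩ l,
        val_cornerHom_path hsn hr (by simp only; omega)⟩
    · rw [Nalg.isArrowSystem.path_eq_zero_of_le (Nalg.path_eq_zero hr _) (not_lt.1 hl)]
      exact Submodule.zero_mem _
  · exact Submodule.zero_mem _

theorem range_cornerEmbedding (hsn : s ≤ n) (hr : r ≠ 0) (hsr : s + r ≤ n + 1) :
    Set.range (cornerEmbedding (K := K) hsn hr) =
      {x | cornerIdem K n r s * x * cornerIdem K n r s = x} := by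
  ext y
  constructor
  · rintro ⟨x, rfl⟩
    obtain ⟨hleft, hright⟩ :=
      (Subsemigroup.mem_corner_iff (isIdempotentElem_cornerIdem hsn)).1 (cornerHom hsn hr x).2
    rw [Set.mem_ofPred_eq, cornerEmbedding_apply, hleft, hright]
  · intro hy
    rw [Set.mem_ofPred_eq] at hy
    have hspan : y ∈ Submodule.span K (Set.range fun q : ZMod n × ℕ =>
        path (Nalg.vertex K n r) (Nalg.arrow K n r) q.1 q.2) := by
      rw [Nalg.isArrowSystem.span_path Nalg.adjoin_eq_top]
      exact Submodule.mem_top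
    rw [← hy, ← LinearMap.coe_range, SetLike.mem_coe]
    clear hy
    induction hspan using Submodule.span_induction with
    | mem _ hx =>
      obtain ⟨⟨j, l⟩, rfl⟩ := hx
      exact cornerIdem_mul_path_mul_cornerIdem_mem_range hsn hr hsr j l
    | zero => simp
    | add x z _ _ hx hz =>
      rw [mul_add, add_mul]
      exact Submodule.add_mem _ hx hz
    | smul c x _ hx =>
      rw [mul_smul_comm, smul_mul_assoc]
      exact Submodule.smul_mem _ c hx

end CornerOfNakayama

theorem corner_of_nakayama_iso (n r s : ℕ) [NeZero n] [NeZero s]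
    (hr : 1 < r) (hsn : s ≤ n) (hsr : s + r ≤ n + 1) :
    ∃ f : Aalg K s r →ₗ[K] Nalg K n r,
      Function.Injective f ∧
      (∀ a b, f (a * b) = f a * f b) ∧
      f 1 = cornerIdem K n r s ∧
      Set.range f =
        {x : Nalg K n r | cornerIdem K n r s * x * cornerIdem K n r s = x} := by
  have hr0 : r ≠ 0 := by omega
  refine ⟨cornerEmbedding hsn hr0, injective_cornerEmbedding hsn hr0, fun a b => ?_, ?_,
    range_cornerEmbedding hsn hr0 hsr⟩
  · simp only [cornerEmbedding_apply, map_mul]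
    rfl
  · rw [cornerEmbedding_apply, map_one]
    rfl

end
end

section
/- Let Λ be a hereditary ring (every submodule of a projective right Λ-module is projective) and e an idempotent of Λ. Then the ideal ΛeΛ is projective as a right Λ-module, and hence the canonical map Λ → Λ/ΛeΛ is a homological epimorphism. -/
open CategoryTheory

noncomputable section

variable (Λ : Type) [Ring Λ] (e : Λ)

/-- The relation generating the two-sided ideal `ΛeΛ`. -/
def eRel : Λ → Λ → Prop := fun a b => a = e ∧ b = 0

/-- The quotient ring `Γ = Λ/ΛeΛ`. -/
def Qe : Type := RingQuot (eRel Λ e)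

instance : Ring (Qe Λ e) := by unfold Qe; infer_instance

/-- The canonical (homological epimorphism) projection `π : Λ → Λ/ΛeΛ`. -/
def qeMk : Λ →+* Qe Λ e := RingQuot.mkRingHom (eRel Λ e)

/-- `Γ = Λ/ΛeΛ` as a right `Λ`-module (i.e. a `Λᵐᵒᵖ`-module) via `π`. -/
instance : Module Λᵐᵒᵖ (Qe Λ e) := Module.compHom _ (RingHom.op (qeMk Λ e))

/-- Defining relations of the tensor product `M ⊗_Λ Γ` of a right `Λ`-module
`M` with `Γ = Λ/ΛeΛ`: biadditivity and balancedness over `Λ`. -/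
def tgRels (M : ModuleCat Λᵐᵒᵖ) : Set (FreeAbelianGroup (M × Qe Λ e)) :=
  {x | ∃ (m m' : M) (g : Qe Λ e), x = .of (m + m', g) - .of (m, g) - .of (m', g)} ∪
  {x | ∃ (m : M) (g g' : Qe Λ e), x = .of (m, g + g') - .of (m, g) - .of (m, g')} ∪
  {x | ∃ (m : M) (l : Λ) (g : Qe Λ e),
    x = .of ((MulOpposite.op l) • m, g) - .of (m, qeMk Λ e l * g)}

/-- The tensor product `M ⊗_Λ Γ` (an abelian group). -/
def TG (M : ModuleCat Λᵐᵒᵖ) : Type :=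
  FreeAbelianGroup (M × Qe Λ e) ⧸ AddSubgroup.closure (tgRels Λ e M)

instance (M : ModuleCat Λᵐᵒᵖ) : AddCommGroup (TG Λ e M) := by
  unfold TG; infer_instance

/-- The elementary tensor `m ⊗ g` in `M ⊗_Λ Γ`. -/
def mkTG {M : ModuleCat Λᵐᵒᵖ} (m : M) (g : Qe Λ e) : TG Λ e M :=
  QuotientAddGroup.mk (FreeAbelianGroup.of (m, g))

/-- Functoriality of `- ⊗_Λ Γ`. -/
def TGmap {M N : ModuleCat Λᵐᵒᵖ} (f : M ⟶ N) : TG Λ e M →+ TG Λ e N :=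
  QuotientAddGroup.map _ _ (FreeAbelianGroup.map (Prod.map f id)) (by
    rw [AddSubgroup.closure_le]
    rintro x (((⟨m, m', g, rfl⟩) | (⟨m, g, g', rfl⟩)) | (⟨m, l, g, rfl⟩)) <;>
      refine AddSubgroup.mem_comap.mpr (AddSubgroup.subset_closure ?_) <;>
      simp only [map_sub, FreeAbelianGroup.map_of_apply, Prod.map_apply, id_eq,
        map_add, map_smul]
    · exact Or.inl (Or.inl ⟨f m, f m', g, rfl⟩)
    · exact Or.inl (Or.inr ⟨f m, g, g', rfl⟩)
    · exact Or.inr ⟨f m, l, g, rfl⟩)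

/-- The tensor functor `- ⊗_Λ Γ : Mod-Λ ⥤ Ab`. -/
def TGfunctor : ModuleCat Λᵐᵒᵖ ⥤ AddCommGrpCat where
  obj M := AddCommGrpCat.of (TG Λ e M)
  map f := AddCommGrpCat.ofHom (TGmap Λ e f)
  map_id := by
    intro M
    refine AddCommGrpCat.ext fun x => QuotientAddGroup.induction_on x fun z => ?_
    have h : Prod.map (⇑(𝟙 M)) (id : Qe Λ e → Qe Λ e) = id := by
      funext p; cases p; simp
    show (QuotientAddGroup.mk _ : TG Λ e M) = QuotientAddGroup.mk z
    rw [h, FreeAbelianGroup.map_id, AddMonoidHom.id_apply]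
  map_comp := by
    intro M N P f g
    refine AddCommGrpCat.ext fun x => QuotientAddGroup.induction_on x fun z => ?_
    have h : Prod.map (⇑(f ≫ g)) (id : Qe Λ e → Qe Λ e) =
        (Prod.map (⇑g) id) ∘ (Prod.map (⇑f) id) := by
      funext p; cases p; simp
    show (QuotientAddGroup.mk _ : TG Λ e P) = QuotientAddGroup.mk _
    rw [h, FreeAbelianGroup.map_comp, AddMonoidHom.comp_apply]

instance : (TGfunctor Λ e).Additive := by
  constructor
  intro M N f g
  refine AddCommGrpCat.ext fun x => QuotientAddGroup.induction_on x fun z => ?_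
  show TGmap Λ e (f + g) ((QuotientAddGroup.mk z : TG Λ e M)) =
    TGmap Λ e f (QuotientAddGroup.mk z) + TGmap Λ e g (QuotientAddGroup.mk z)
  induction z using FreeAbelianGroup.induction_on with
  | zero =>
    show TGmap Λ e (f + g) (0 : TG Λ e M) = TGmap Λ e f (0 : TG Λ e M) + TGmap Λ e g (0 : TG Λ e M)
    simp only [map_zero, add_zero]
  | of p =>
    obtain ⟨m, γ⟩ := p
    show (QuotientAddGroup.mk (FreeAbelianGroup.of ((f + g) m, γ)) : TG Λ e N) =
      QuotientAddGroup.mk (FreeAbelianGroup.of (f m, γ)) +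
        QuotientAddGroup.mk (FreeAbelianGroup.of (g m, γ))
    show (QuotientAddGroup.mk (FreeAbelianGroup.of ((f + g) m, γ)) : TG Λ e N) =
      QuotientAddGroup.mk (FreeAbelianGroup.of (f m, γ) + FreeAbelianGroup.of (g m, γ))
    rw [QuotientAddGroup.eq]
    have hgen : FreeAbelianGroup.of ((f m + g m : N), γ) -
        FreeAbelianGroup.of ((f m : N), γ) - FreeAbelianGroup.of ((g m : N), γ) ∈
        tgRels Λ e N := Or.inl (Or.inl ⟨f m, g m, γ, rfl⟩)
    have h2 := neg_mem (AddSubgroup.subset_closure hgen)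
    convert h2 using 1
    have hfg : ((f + g) m : N) = f m + g m := rfl
    rw [hfg]
    abel
  | neg p hp =>
    erw [QuotientAddGroup.mk_neg, map_neg, map_neg, map_neg, hp]
    abel
  | add p q hp hq =>
    erw [QuotientAddGroup.mk_add, map_add, map_add, map_add, hp, hq]
    abel

/-- `Γ = Λ/ΛeΛ` as an object of the category of right `Λ`-modules. -/
def Γmod : ModuleCat Λᵐᵒᵖ := @ModuleCat.of Λᵐᵒᵖ _ (Qe Λ e) _ (instModuleMulOppositeQe Λ e)

/-- The right `Λ`-submodule `ΛeΛ` of `Λ` (generated by `Λe`). -/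
def IeΛ : Submodule Λᵐᵒᵖ Λ := Submodule.span Λᵐᵒᵖ {x : Λ | ∃ a : Λ, x = a * e}

/-! Since `Λ` is hereditary, `ΛeΛ` is projective, so `0 → ΛeΛ → Λ → Γ → 0` is a projective
resolution of `Γ = Λ/ΛeΛ` of length one. Hence `Tor_i(Γ, Γ) = 0` for `i ≥ 2`, and `Tor_1(Γ, Γ)`
is a subgroup of `ΛeΛ ⊗_Λ Γ`, which vanishes: `ΛeΛ` is generated by the elements `a e`, which
satisfy `a e = a e · e` because `e` is idempotent, so `a e ⊗ g = a e ⊗ π(e) g = 0`.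
The multiplication `Γ ⊗_Λ Γ → Γ` is bijective with inverse `g ↦ g ⊗ 1`, since `π` is
surjective: `a ⊗ π(l) = a π(l) ⊗ 1`. -/

namespace CategoryTheory

open Limits ZeroObject

universe u v

namespace ShortComplex

variable {C : Type u} [Category.{v} C] [Abelian C] (S : ShortComplex C)

def twoTermX : ℕ → C
  | 0 => S.X₂
  | 1 => S.X₁
  | _ + 2 => 0

def twoTermD : ∀ n, S.twoTermX (n + 1) ⟶ S.twoTermX n
  | 0 => S.f
  | _ + 1 => 0

def twoTermComplex : ChainComplex C ℕ :=
  ChainComplex.of S.twoTermX S.twoTermD fun _ => zero_comp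

theorem twoTermComplex_d_one_zero : S.twoTermComplex.d 1 0 = S.f :=
  ChainComplex.of_d S.twoTermX S.twoTermD 0

theorem twoTermComplex_d_succ (n : ℕ) : S.twoTermComplex.d (n + 2) (n + 1) = 0 :=
  ChainComplex.of_d _ _ (n + 1)

theorem isZero_twoTermComplex_X (n : ℕ) : IsZero (S.twoTermComplex.X (n + 2)) :=
  isZero_zero C

variable {S}

def ShortExact.projectiveResolution (hS : S.ShortExact)
    [Projective S.X₁] [Projective S.X₂] : ProjectiveResolution S.X₃ where
  complex := S.twoTermComplex
  projective
    | 0 => inferInstanceAs (Projective S.X₂)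
    | 1 => inferInstanceAs (Projective S.X₁)
    | n + 2 => (S.isZero_twoTermComplex_X n).projective
  π := (ChainComplex.toSingle₀Equiv _ _).symm
    ⟨S.g, by rw [twoTermComplex_d_one_zero]; exact S.zero⟩
  quasiIso := ⟨fun n => by
    cases n with
    | zero =>
      rw [ChainComplex.quasiIsoAt₀_iff, ShortComplex.quasiIso_iff_of_zeros']
      · refine (ShortComplex.exact_and_epi_g_iff_of_iso ?_).2 ⟨hS.exact, hS.epi_g⟩
        refine ShortComplex.isoMk (Iso.refl _) (Iso.refl _) (Iso.refl _) ?_ ?_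
        · show 𝟙 _ ≫ S.f = S.twoTermComplex.d 1 0 ≫ 𝟙 _
          rw [twoTermComplex_d_one_zero]
          exact (Category.id_comp _).trans (Category.comp_id _).symm
        · show 𝟙 _ ≫ S.g = ((ChainComplex.toSingle₀Equiv _ _).symm
            ⟨S.g, _⟩ : S.twoTermComplex ⟶ _).f 0 ≫ 𝟙 _
          erw [ChainComplex.toSingle₀Equiv_symm_apply_f_zero, Category.comp_id,
            Category.id_comp]
      all_goals rfl
    | succ n =>
      rw [quasiIsoAt_iff_exactAt' _ _ (ChainComplex.exactAt_succ_single_obj _ _),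
        HomologicalComplex.exactAt_iff' _ (n + 2) (n + 1) n (by simp) (by simp)]
      cases n with
      | zero =>
        refine (ShortComplex.exact_iff_mono _ (S.twoTermComplex_d_succ 0)).2 ?_
        show Mono (S.twoTermComplex.d 1 0)
        rw [twoTermComplex_d_one_zero]
        exact hS.mono_f
      | succ n => exact ShortComplex.exact_of_isZero_X₂ _ (S.isZero_twoTermComplex_X n)⟩

theorem ShortExact.isZero_leftDerived_succ [HasProjectiveResolutions C]
    {D : Type*} [Category D] [Abelian D]
    (F : C ⥤ D) [F.Additive] (hS : S.ShortExact) [Projective S.X₁] [Projective S.X₂]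
    (hF : IsZero (F.obj S.X₁)) (n : ℕ) : IsZero ((F.leftDerived (n + 1)).obj S.X₃) := by
  refine IsZero.of_iso ?_ (hS.projectiveResolution.isoLeftDerivedObj F (n + 1))
  refine ShortComplex.isZero_homology_of_isZero_X₂ _ ?_
  cases n with
  | zero => exact hF
  | succ n => exact F.map_isZero (S.isZero_twoTermComplex_X n)

end ShortComplex

end CategoryTheory

open MulOpposite

theorem qeMk_surjective : Function.Surjective (qeMk Λ e) :=
  RingQuot.mkRingHom_surjective _

theorem qeMk_self : qeMk Λ e e = 0 :=
  (RingQuot.mkRingHom_rel (r := eRel Λ e) ⟨rfl, rfl⟩).trans (map_zero _)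

theorem mul_mem_IeΛ (c : Λ) {x : Λ} (hx : x ∈ IeΛ Λ e) : c * x ∈ IeΛ Λ e := by
  let mulLeft : Λ →ₗ[Λᵐᵒᵖ] Λ := DistribSMul.toLinearMap Λᵐᵒᵖ Λ c
  suffices IeΛ Λ e ≤ (IeΛ Λ e).comap mulLeft from this hx
  refine Submodule.span_le.mpr ?_
  rintro _ ⟨a, rfl⟩
  exact Submodule.subset_span ⟨c * a, (mul_assoc c a e).symm⟩

def IeΛTwoSided : TwoSidedIdeal Λ :=
  TwoSidedIdeal.mk' (IeΛ Λ e) (IeΛ Λ e).zero_mem (IeΛ Λ e).add_mem (IeΛ Λ e).neg_mem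
    (mul_mem_IeΛ Λ e _) (fun {_ y} hx => (IeΛ Λ e).smul_mem (op y) hx)

theorem mem_IeΛ_of_qeMk_eq_zero {x : Λ} (hx : qeMk Λ e x = 0) : x ∈ IeΛ Λ e := by
  let c := (IeΛTwoSided Λ e).ringCon
  have hc (a b : Λ) : (a : c.Quotient) = b ↔ a - b ∈ IeΛ Λ e := c.eq
  have he_mem : e ∈ IeΛ Λ e := Submodule.subset_span ⟨1, (one_mul e).symm⟩
  let toQuotient : Qe Λ e →+* c.Quotient :=
    RingQuot.lift ⟨c.mk', fun a b ⟨ha, hb⟩ => (hc a b).2 (by simpa [ha, hb] using he_mem)⟩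
  have hlift : toQuotient (qeMk Λ e x) = x := RingQuot.lift_mkRingHom_apply _ _ x
  rw [hx, map_zero] at hlift
  simpa using (hc x 0).1 hlift.symm

def qeLin : Λ →ₗ[Λᵐᵒᵖ] Γmod Λ e where
  toFun := qeMk Λ e
  map_add' := map_add _
  map_smul' l x := map_mul (qeMk Λ e) x l.unop

theorem ker_qeLin : LinearMap.ker (qeLin Λ e) = IeΛ Λ e := by
  refine le_antisymm (fun x hx => mem_IeΛ_of_qeMk_eq_zero Λ e hx) (Submodule.span_le.mpr ?_)
  rintro _ ⟨a, rfl⟩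
  show qeMk Λ e (a * e) = 0
  rw [map_mul, qeMk_self, mul_zero]

def IeΛShortComplex : ShortComplex (ModuleCat Λᵐᵒᵖ) where
  f := ModuleCat.ofHom (IeΛ Λ e).subtype
  g := ModuleCat.ofHom (qeLin Λ e)
  zero := by
    ext x
    exact (ker_qeLin Λ e).ge x.2

theorem IeΛShortComplex_shortExact : (IeΛShortComplex Λ e).ShortExact :=
  ModuleCat.shortComplex_shortExact _
    (LinearMap.exact_iff.mpr ((ker_qeLin Λ e).trans (Submodule.range_subtype _).symm))
    Subtype.val_injective (qeMk_surjective Λ e)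

section TensorProduct

variable {Λ e} {M : ModuleCat Λᵐᵒᵖ}

theorem mk_eq_zero_of_mem_tgRels {x : FreeAbelianGroup (M × Qe Λ e)} (hx : x ∈ tgRels Λ e M) :
    (QuotientAddGroup.mk x : TG Λ e M) = 0 :=
  (QuotientAddGroup.eq_zero_iff x).mpr (AddSubgroup.subset_closure hx)

theorem mkTG_add_left (m m' : M) (g : Qe Λ e) :
    mkTG Λ e (m + m') g = mkTG Λ e m g + mkTG Λ e m' g := by
  rw [← sub_eq_zero, ← sub_sub]
  exact mk_eq_zero_of_mem_tgRels (Or.inl (Or.inl ⟨m, m', g, rfl⟩))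

theorem mkTG_add_right (m : M) (g g' : Qe Λ e) :
    mkTG Λ e m (g + g') = mkTG Λ e m g + mkTG Λ e m g' := by
  rw [← sub_eq_zero, ← sub_sub]
  exact mk_eq_zero_of_mem_tgRels (Or.inl (Or.inr ⟨m, g, g', rfl⟩))

theorem mkTG_smul (m : M) (l : Λ) (g : Qe Λ e) :
    mkTG Λ e (op l • m) g = mkTG Λ e m (qeMk Λ e l * g) := by
  rw [← sub_eq_zero]
  exact mk_eq_zero_of_mem_tgRels (Or.inr ⟨m, l, g, rfl⟩)

theorem mkTG_zero_left (g : Qe Λ e) : mkTG Λ e (0 : M) g = 0 := by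
  simpa using mkTG_add_left (0 : M) 0 g

theorem mkTG_zero_right (m : M) : mkTG Λ e m (0 : Qe Λ e) = 0 := by
  simpa using mkTG_add_right m (0 : Qe Λ e) 0

theorem TG.addMonoidHom_ext {A : Type*} [AddCommGroup A] {f f' : TG Λ e M →+ A}
    (h : ∀ m g, f (mkTG Λ e m g) = f' (mkTG Λ e m g)) : f = f' :=
  QuotientAddGroup.addMonoidHom_ext _ (FreeAbelianGroup.lift_ext _ _ fun ⟨m, g⟩ => h m g)

theorem mkTG_eq_zero_of_smul_eq_self {m : M} (hm : op e • m = m) (g : Qe Λ e) :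
    mkTG Λ e m g = 0 := by
  rw [← hm, mkTG_smul, qeMk_self, zero_mul, mkTG_zero_right]

variable (Λ e M) in
def tgVanishing : Submodule Λᵐᵒᵖ M where
  carrier := {m | ∀ g, mkTG Λ e m g = 0}
  add_mem' hm hm' g := by rw [mkTG_add_left, hm, hm', add_zero]
  zero_mem' := mkTG_zero_left
  smul_mem' c m hm g := by rw [← op_unop c, mkTG_smul, hm]

theorem isZero_TGfunctor_obj_of_tgVanishing_eq_top (h : tgVanishing Λ e M = ⊤) :
    Limits.IsZero ((TGfunctor Λ e).obj M) := by
  have hid : AddMonoidHom.id (TG Λ e M) = 0 :=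
    TG.addMonoidHom_ext fun m g => (h ▸ Submodule.mem_top : m ∈ tgVanishing Λ e M) g
  have : Subsingleton (TG Λ e M) :=
    ⟨fun x y => (DFunLike.congr_fun hid x).trans (DFunLike.congr_fun hid y).symm⟩
  exact @AddCommGrpCat.isZero_of_subsingleton _ this

end TensorProduct

theorem tgVanishing_IeΛ (he : IsIdempotentElem e) :
    tgVanishing Λ e (ModuleCat.of Λᵐᵒᵖ (IeΛ Λ e)) = ⊤ := by
  refine eq_top_iff.mpr <| (Submodule.span_span_coe_preimage (R := Λᵐᵒᵖ)
    (s := {x : Λ | ∃ a, x = a * e})).ge.trans (Submodule.span_le.mpr ?_)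
  rintro ⟨_, _⟩ ⟨a, rfl⟩
  refine mkTG_eq_zero_of_smul_eq_self (Subtype.ext ?_)
  show a * e * e = a * e
  rw [mul_assoc, he]

def mulTG : TG Λ e (Γmod Λ e) →+ Qe Λ e :=
  QuotientAddGroup.lift _ (FreeAbelianGroup.lift fun p : Qe Λ e × Qe Λ e => p.1 * p.2) <| by
    rw [AddSubgroup.closure_le]
    rintro _ ((⟨(m : Qe Λ e), (m' : Qe Λ e), g, rfl⟩ | ⟨(m : Qe Λ e), g, g', rfl⟩) |
      ⟨(m : Qe Λ e), l, g, rfl⟩) <;>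
      simp only [SetLike.mem_coe, AddMonoidHom.mem_ker, map_sub] <;>
      erw [FreeAbelianGroup.lift_apply_of, FreeAbelianGroup.lift_apply_of]
    · erw [FreeAbelianGroup.lift_apply_of]
      rw [sub_sub, sub_eq_zero]
      exact add_mul m m' g
    · erw [FreeAbelianGroup.lift_apply_of]
      rw [sub_sub, sub_eq_zero]
      exact mul_add m g g'
    · exact sub_eq_zero_of_eq (mul_assoc m (qeMk Λ e l) g)

theorem mulTG_mkTG (a b : Qe Λ e) : mulTG Λ e (mkTG Λ e a b) = a * b :=
  FreeAbelianGroup.lift_apply_of _ _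

theorem mkTG_eq_mkTG_mul_one (a b : Qe Λ e) :
    mkTG Λ e (M := Γmod Λ e) a b = mkTG Λ e (M := Γmod Λ e) (a * b) 1 := by
  obtain ⟨l, rfl⟩ := qeMk_surjective Λ e b
  have h := mkTG_smul (e := e) (M := Γmod Λ e) a l 1
  rw [mul_one] at h
  exact h.symm

theorem mulTG_bijective : Function.Bijective (mulTG Λ e) := by
  let inv : Qe Λ e →+ TG Λ e (Γmod Λ e) :=
    AddMonoidHom.mk' (fun g => mkTG Λ e g 1) fun a b => mkTG_add_left (M := Γmod Λ e) a b 1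
  have hinv : inv.comp (mulTG Λ e) = AddMonoidHom.id _ :=
    TG.addMonoidHom_ext fun a b =>
      (congrArg inv (mulTG_mkTG Λ e a b)).trans (mkTG_eq_mkTG_mul_one Λ e a b).symm
  exact Function.bijective_iff_has_inverse.mpr
    ⟨inv, DFunLike.congr_fun hinv, fun g => (mulTG_mkTG Λ e g 1).trans (mul_one g)⟩

/-- Let `Λ` be a (right) hereditary ring (every right ideal is projective as
a right module) and `e` an idempotent of `Λ`.  Then the ideal `ΛeΛ` is
projective as a right `Λ`-module, and hence the canonical map `Λ → Λ/ΛeΛ` is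
a homological epimorphism: the multiplication map
`(Λ/ΛeΛ) ⊗_Λ (Λ/ΛeΛ) → Λ/ΛeΛ` is an isomorphism and
`Tor_i^Λ(Λ/ΛeΛ, Λ/ΛeΛ) = 0` for all `i > 0`, where `Tor_i` is the `i`-th
left derived functor of `- ⊗_Λ (Λ/ΛeΛ)`. -/
theorem hereditary_homological_epi
    (he : IsIdempotentElem e)
    (hhered : ∀ I : Submodule Λᵐᵒᵖ Λ, Module.Projective Λᵐᵒᵖ I) :
    Module.Projective Λᵐᵒᵖ (IeΛ Λ e) ∧
    (∃ m : TG Λ e (Γmod Λ e) →+ Qe Λ e,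
        (∀ a b : Qe Λ e, m (mkTG Λ e a b) = a * b) ∧ Function.Bijective m) ∧
    (∀ i : ℕ, 0 < i →
      Limits.IsZero (((TGfunctor Λ e).leftDerived i).obj (Γmod Λ e))) := by
  refine ⟨hhered _, ⟨mulTG Λ e, mulTG_mkTG Λ e, mulTG_bijective Λ e⟩, fun i hi => ?_⟩
  have : Projective (IeΛShortComplex Λ e).X₁ := (IsProjective.iff_projective _).mp (hhered _)
  have : Projective (IeΛShortComplex Λ e).X₂ := by
    have := hhered ⊤
    exact (IsProjective.iff_projective _).mp (.of_equiv Submodule.topEquiv)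
  obtain ⟨n, rfl⟩ := Nat.exists_eq_add_one.mpr hi
  exact (IeΛShortComplex_shortExact Λ e).isZero_leftDerived_succ (TGfunctor Λ e)
    (isZero_TGfunctor_obj_of_tgVanishing_eq_top (tgVanishing_IeΛ Λ e he)) n

end
end
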